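/- Let f : ℝ^{n-1} → ℝ be defined by f(x') = (1 + |x'|)^{1-n}. Then the Hardy–Littlewood maximal function of f satisfies Mf(x') ≈ (1 + log₊|x'|)/(1 + |x'|^{n-1}) for all x' ∈ ℝ^{n-1}, with implicit constants depending only on n. -/

import Mathlib

open MeasureTheory Metric
open scoped BigOperators ENNReal

/-- The (uncentered-radius) Hardy–Littlewood maximal function
`Mf(x) = sup_{r>0} ⨍_{B(x,r)} |f|`. -/
noncomputable def hlMaximal {m : ℕ} (f : EuclideanSpace ℝ (Fin m) → ℝ)
    (x : EuclideanSpace ℝ (Fin m)) : ℝ≥0∞ :=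
  ⨆ r ∈ Set.Ioi (0 : ℝ),
    (volume (Metric.ball x r))⁻¹ * ∫⁻ y in Metric.ball x r, ENNReal.ofReal |f y|

namespace St3Aux

/-- The integrand. -/
noncomputable def F (m : ℕ) (y : EuclideanSpace ℝ (Fin m)) : ℝ≥0∞ :=
  ENNReal.ofReal ((1 + ‖y‖) ^ (-(m : ℝ)))

lemma measurable_F (m : ℕ) : Measurable (F m) := by
  have hc : Continuous fun y : EuclideanSpace ℝ (Fin m) => (1 + ‖y‖) ^ (-(m : ℝ)) :=
    (continuous_const.add continuous_norm).rpow_const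
      (fun y => Or.inl (by positivity : (0:ℝ) < 1 + ‖y‖).ne')
  exact (ENNReal.continuous_ofReal.comp hc).measurable

lemma F_le {m : ℕ} {a : ℝ} (ha : 0 < a) {y : EuclideanSpace ℝ (Fin m)}
    (h : a ≤ 1 + ‖y‖) : F m y ≤ ENNReal.ofReal (a ^ (-(m : ℝ))) :=
  ENNReal.ofReal_le_ofReal
    (Real.rpow_le_rpow_of_nonpos ha h (neg_nonpos.mpr (Nat.cast_nonneg m)))

lemma le_F {m : ℕ} {a : ℝ} {y : EuclideanSpace ℝ (Fin m)}
    (h : 1 + ‖y‖ ≤ a) : ENNReal.ofReal (a ^ (-(m : ℝ))) ≤ F m y :=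
  ENNReal.ofReal_le_ofReal
    (Real.rpow_le_rpow_of_nonpos (by positivity) h (neg_nonpos.mpr (Nat.cast_nonneg m)))

/-- Volume of the unit ball. -/
noncomputable def ω (m : ℕ) : ℝ≥0∞ := volume (ball (0 : EuclideanSpace ℝ (Fin m)) 1)

lemma ω_pos (m : ℕ) : 0 < ω m := measure_ball_pos _ _ one_pos

lemma ω_ne_top (m : ℕ) : ω m ≠ ∞ := measure_ball_lt_top.ne

lemma vol_ball {m : ℕ} (hm : 1 ≤ m) (x : EuclideanSpace ℝ (Fin m)) {r : ℝ} (hr : 0 ≤ r) :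
    volume (ball x r) = ENNReal.ofReal (r ^ m) * ω m := by
  have : Nontrivial (EuclideanSpace ℝ (Fin m)) :=
    Module.nontrivial_of_finrank_pos (R := ℝ)
      (by rw [finrank_euclideanSpace_fin]; omega)
  simpa [finrank_euclideanSpace_fin, ω] using Measure.addHaar_ball (volume) x hr

/-- Integral over the dyadic ball. -/
noncomputable def J (m K : ℕ) : ℝ≥0∞ :=
  ∫⁻ y in ball (0 : EuclideanSpace ℝ (Fin m)) ((2 : ℝ) ^ K), F m y

lemma J_le {m : ℕ} (hm : 1 ≤ m) (K : ℕ) :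
    J m K ≤ ENNReal.ofReal ((2 : ℝ) ^ m * (K + 1)) * ω m := by
  induction K with
  | zero =>
    have h1 : ∀ y : EuclideanSpace ℝ (Fin m), F m y ≤ 1 := by
      intro y
      have := F_le (m := m) (a := 1) one_pos (y := y) (by simp [norm_nonneg])
      simpa [Real.one_rpow] using this
    have : J m 0 ≤ ω m := by
      calc J m 0 ≤ ∫⁻ _ in ball (0 : EuclideanSpace ℝ (Fin m)) ((2:ℝ)^(0:ℕ)), 1 :=
            lintegral_mono h1
        _ = ω m := by rw [setLIntegral_one]; norm_num [ω]
    refine this.trans ?_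
    refine le_mul_of_one_le_left (by simp) ?_
    rw [show ((0:ℕ):ℝ) + 1 = 1 by norm_num]
    refine ENNReal.one_le_ofReal.mpr ?_
    have : (1:ℝ) ≤ 2 ^ m := one_le_pow₀ (by norm_num)
    nlinarith
  | succ K ih =>
    have hsub : ball (0 : EuclideanSpace ℝ (Fin m)) ((2:ℝ)^K)
        ⊆ ball 0 ((2:ℝ)^(K+1)) :=
      ball_subset_ball (by
        have : (2:ℝ)^K ≤ 2^(K+1) := by
          apply pow_le_pow_right₀ (by norm_num); omega
        linarith)
    have hdecomp : ball (0 : EuclideanSpace ℝ (Fin m)) ((2:ℝ)^(K+1))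
        = ball 0 ((2:ℝ)^K) ∪ (ball 0 ((2:ℝ)^(K+1)) \ ball 0 ((2:ℝ)^K)) :=
      (Set.union_diff_cancel hsub).symm
    have hann : (∫⁻ y in ball (0 : EuclideanSpace ℝ (Fin m)) ((2:ℝ)^(K+1))
          \ ball 0 ((2:ℝ)^K), F m y) ≤ ENNReal.ofReal ((2:ℝ)^m) * ω m := by
      have hpt : ∀ y ∈ ball (0 : EuclideanSpace ℝ (Fin m)) ((2:ℝ)^(K+1))
          \ ball 0 ((2:ℝ)^K), F m y ≤ ENNReal.ofReal (((2:ℝ)^K) ^ (-(m:ℝ))) := by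
        intro y hy
        apply F_le (by positivity)
        have h2 : ¬ (dist y 0 < (2:ℝ)^K) := fun h => hy.2 (mem_ball.mpr h)
        rw [dist_zero_right] at h2
        push_neg at h2
        linarith [h2]
      calc (∫⁻ y in ball (0 : EuclideanSpace ℝ (Fin m)) ((2:ℝ)^(K+1))
            \ ball 0 ((2:ℝ)^K), F m y)
          ≤ ∫⁻ _ in ball (0 : EuclideanSpace ℝ (Fin m)) ((2:ℝ)^(K+1))
            \ ball 0 ((2:ℝ)^K), ENNReal.ofReal (((2:ℝ)^K) ^ (-(m:ℝ))) :=
            setLIntegral_mono measurable_const hpt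
        _ = ENNReal.ofReal (((2:ℝ)^K) ^ (-(m:ℝ)))
              * volume (ball (0 : EuclideanSpace ℝ (Fin m)) ((2:ℝ)^(K+1))
                \ ball 0 ((2:ℝ)^K)) := setLIntegral_const _ _
        _ ≤ ENNReal.ofReal (((2:ℝ)^K) ^ (-(m:ℝ)))
              * volume (ball (0 : EuclideanSpace ℝ (Fin m)) ((2:ℝ)^(K+1))) := by
            gcongr
            exact Set.diff_subset
        _ = ENNReal.ofReal (((2:ℝ)^K) ^ (-(m:ℝ)))
              * (ENNReal.ofReal (((2:ℝ)^(K+1)) ^ m) * ω m) := by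
            rw [vol_ball hm _ (by positivity)]
        _ = ENNReal.ofReal ((((2:ℝ)^K) ^ (-(m:ℝ))) * ((2:ℝ)^(K+1)) ^ m) * ω m := by
            rw [← mul_assoc, ← ENNReal.ofReal_mul (by positivity)]
        _ = ENNReal.ofReal ((2:ℝ)^m) * ω m := by
            congr 1
            have hpos : (0:ℝ) < (2:ℝ)^K := by positivity
            rw [Real.rpow_neg hpos.le, Real.rpow_natCast]
            rw [show ((2:ℝ)^(K+1))^m = ((2:ℝ)^K)^m * 2^m by ring]
            field_simp
    have hJsucc : J m (K+1) = J m K + ∫⁻ y in ball (0 : EuclideanSpace ℝ (Fin m)) ((2:ℝ)^(K+1))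
        \ ball 0 ((2:ℝ)^K), F m y := by
      rw [J, J, ← lintegral_union (measurableSet_ball.diff measurableSet_ball)
        Set.disjoint_sdiff_right, ← hdecomp]
    calc J m (K+1)
        = J m K + ∫⁻ y in ball (0 : EuclideanSpace ℝ (Fin m)) ((2:ℝ)^(K+1))
            \ ball 0 ((2:ℝ)^K), F m y := hJsucc
      _ ≤ ENNReal.ofReal ((2:ℝ)^m * (K+1)) * ω m + ENNReal.ofReal ((2:ℝ)^m) * ω m := by
          gcongr
      _ = ENNReal.ofReal ((2:ℝ)^m * ((K+1)+1)) * ω m := by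
          rw [← add_mul, ← ENNReal.ofReal_add (by positivity) (by positivity)]
          congr 2
          push_cast
          ring
      _ = ENNReal.ofReal ((2:ℝ)^m * (((K:ℕ)+1:ℕ) + 1)) * ω m := by push_cast; ring_nf

lemma le_J {m : ℕ} (hm : 1 ≤ m) (K : ℕ) :
    ENNReal.ofReal (((4:ℝ)^m)⁻¹ * (K + 1)) * ω m ≤ J m K := by
  induction K with
  | zero =>
    have hpt : ∀ y ∈ ball (0 : EuclideanSpace ℝ (Fin m)) ((2:ℝ)^(0:ℕ)),
        ENNReal.ofReal ((2:ℝ) ^ (-(m:ℝ))) ≤ F m y := by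
      intro y hy
      apply le_F
      rw [mem_ball, dist_zero_right] at hy
      norm_num at hy
      linarith
    calc ENNReal.ofReal (((4:ℝ)^m)⁻¹ * ((0:ℕ) + 1)) * ω m
        ≤ ENNReal.ofReal ((2:ℝ) ^ (-(m:ℝ))) * ω m := by
          refine mul_le_mul_left (ENNReal.ofReal_le_ofReal ?_) _
          rw [Real.rpow_neg (by norm_num : (0:ℝ) ≤ 2), Real.rpow_natCast,
            Nat.cast_zero]
          rw [show (0:ℝ) + 1 = 1 by norm_num, mul_one]
          exact inv_anti₀ (by positivity)
            (pow_le_pow_left₀ (by norm_num) (by norm_num) m)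
      _ = ∫⁻ _ in ball (0 : EuclideanSpace ℝ (Fin m)) ((2:ℝ)^(0:ℕ)),
            ENNReal.ofReal ((2:ℝ) ^ (-(m:ℝ))) := by
          rw [setLIntegral_const]
          congr 1
      _ ≤ J m 0 := setLIntegral_mono (measurable_F m) hpt
  | succ K ih =>
    have hsub : ball (0 : EuclideanSpace ℝ (Fin m)) ((2:ℝ)^K)
        ⊆ ball 0 ((2:ℝ)^(K+1)) :=
      ball_subset_ball (by
        have : (2:ℝ)^K ≤ 2^(K+1) := by
          apply pow_le_pow_right₀ (by norm_num); omega
        linarith)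
    have hdecomp : ball (0 : EuclideanSpace ℝ (Fin m)) ((2:ℝ)^(K+1))
        = ball 0 ((2:ℝ)^K) ∪ (ball 0 ((2:ℝ)^(K+1)) \ ball 0 ((2:ℝ)^K)) :=
      (Set.union_diff_cancel hsub).symm
    have hannvol : ENNReal.ofReal (((2:ℝ)^K)^m) * ω m
        ≤ volume (ball (0 : EuclideanSpace ℝ (Fin m)) ((2:ℝ)^(K+1)) \ ball 0 ((2:ℝ)^K)) := by
      rw [measure_diff hsub measurableSet_ball.nullMeasurableSet measure_ball_lt_top.ne]
      rw [vol_ball hm _ (by positivity), vol_ball hm _ (by positivity)]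
      rw [← ENNReal.sub_mul (fun _ _ => ω_ne_top m),
        ← ENNReal.ofReal_sub _ (by positivity)]
      refine mul_le_mul_left (ENNReal.ofReal_le_ofReal ?_) _
      have h2m : (2:ℝ) ≤ 2^m := by
        calc (2:ℝ) = 2^1 := by norm_num
        _ ≤ 2^m := by apply pow_le_pow_right₀ (by norm_num); omega
      have : ((2:ℝ)^(K+1))^m = ((2:ℝ)^K)^m * 2^m := by ring
      nlinarith [pow_pos (show (0:ℝ) < 2^K by positivity) m]
    have hann : ENNReal.ofReal (((4:ℝ)^m)⁻¹) * ω m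
        ≤ ∫⁻ y in ball (0 : EuclideanSpace ℝ (Fin m)) ((2:ℝ)^(K+1))
            \ ball 0 ((2:ℝ)^K), F m y := by
      have hpt : ∀ y ∈ ball (0 : EuclideanSpace ℝ (Fin m)) ((2:ℝ)^(K+1))
          \ ball 0 ((2:ℝ)^K),
          ENNReal.ofReal (((2:ℝ)^(K+2)) ^ (-(m:ℝ))) ≤ F m y := by
        intro y hy
        apply le_F
        have h1 : dist y 0 < (2:ℝ)^(K+1) := mem_ball.mp hy.1
        rw [dist_zero_right] at h1
        have h2 : (1:ℝ) + 2^(K+1) ≤ 2^(K+2) := by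
          have : (1:ℝ) ≤ 2^(K+1) := one_le_pow₀ (by norm_num)
          rw [show ((2:ℝ)^(K+2)) = 2^(K+1) + 2^(K+1) by ring]
          linarith
        linarith
      calc ENNReal.ofReal (((4:ℝ)^m)⁻¹) * ω m
          = ENNReal.ofReal (((2:ℝ)^(K+2)) ^ (-(m:ℝ)))
            * (ENNReal.ofReal (((2:ℝ)^K)^m) * ω m) := by
            rw [← mul_assoc, ← ENNReal.ofReal_mul (by positivity)]
            congr 2
            have hpos : (0:ℝ) < (2:ℝ)^(K+2) := by positivity
            rw [Real.rpow_neg hpos.le, Real.rpow_natCast]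
            rw [show ((2:ℝ)^(K+2))^m = ((2:ℝ)^K)^m * 4^m by ring]
            have h1 : (0:ℝ) < ((2:ℝ)^K)^m := by positivity
            have h2 : (0:ℝ) < (4:ℝ)^m := by positivity
            field_simp
        _ ≤ ENNReal.ofReal (((2:ℝ)^(K+2)) ^ (-(m:ℝ)))
            * volume (ball (0 : EuclideanSpace ℝ (Fin m)) ((2:ℝ)^(K+1))
              \ ball 0 ((2:ℝ)^K)) := by gcongr
        _ = ∫⁻ _ in ball (0 : EuclideanSpace ℝ (Fin m)) ((2:ℝ)^(K+1))
              \ ball 0 ((2:ℝ)^K), ENNReal.ofReal (((2:ℝ)^(K+2)) ^ (-(m:ℝ))) :=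
            (setLIntegral_const _ _).symm
        _ ≤ _ := setLIntegral_mono (measurable_F m) hpt
    calc ENNReal.ofReal (((4:ℝ)^m)⁻¹ * (((K:ℕ)+1:ℕ) + 1)) * ω m
        = ENNReal.ofReal (((4:ℝ)^m)⁻¹ * (K+1)) * ω m
          + ENNReal.ofReal (((4:ℝ)^m)⁻¹) * ω m := by
          rw [← add_mul, ← ENNReal.ofReal_add (by positivity) (by positivity)]
          congr 2
          push_cast
          ring
      _ ≤ J m K + ∫⁻ y in ball (0 : EuclideanSpace ℝ (Fin m)) ((2:ℝ)^(K+1))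
            \ ball 0 ((2:ℝ)^K), F m y := by gcongr
      _ = J m (K+1) := by
          rw [J, J, ← lintegral_union (measurableSet_ball.diff measurableSet_ball)
            Set.disjoint_sdiff_right, ← hdecomp]



lemma I_le {m : ℕ} (hm : 1 ≤ m) {R : ℝ} (hR : 1 ≤ R) :
    (∫⁻ y in ball (0 : EuclideanSpace ℝ (Fin m)) R, F m y)
      ≤ ENNReal.ofReal ((2:ℝ)^(m+1) * (1 + Real.log R)) * ω m := by
  set K := ⌈Real.log R / Real.log 2⌉₊ with hK
  have hlogR : 0 ≤ Real.log R := Real.log_nonneg hR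
  have hlog2 : 0 < Real.log 2 := Real.log_pos one_lt_two
  have hdivnn : 0 ≤ Real.log R / Real.log 2 := by positivity
  have h1 : R ≤ (2:ℝ)^K := by
    have h : Real.log R ≤ K * Real.log 2 := by
      rw [← div_le_iff₀ hlog2]
      · exact Nat.le_ceil _
    have hRpos : (0:ℝ) < R := by linarith
    rw [← Real.log_le_log_iff hRpos (by positivity), Real.log_pow]
    exact h
  have h2 : (K:ℝ) + 1 ≤ 2 * (1 + Real.log R) := by
    have hceil : (K:ℝ) < Real.log R / Real.log 2 + 1 := by
      rw [hK]; exact Nat.ceil_lt_add_one hdivnn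
    have hl2 : (1:ℝ)/2 ≤ Real.log 2 := by
      have := Real.log_two_gt_d9; linarith
    have hh : Real.log R / Real.log 2 ≤ 2 * Real.log R := by
      rw [div_le_iff₀ hlog2]; nlinarith
    linarith
  calc (∫⁻ y in ball (0 : EuclideanSpace ℝ (Fin m)) R, F m y)
      ≤ J m K := lintegral_mono_set (ball_subset_ball h1)
    _ ≤ ENNReal.ofReal ((2:ℝ)^m * (K+1)) * ω m := J_le hm K
    _ ≤ ENNReal.ofReal ((2:ℝ)^(m+1) * (1 + Real.log R)) * ω m := by
        refine mul_le_mul_left (ENNReal.ofReal_le_ofReal ?_) _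
        have h2m : (0:ℝ) < 2^m := by positivity
        rw [pow_succ]
        nlinarith

lemma le_I {m : ℕ} (hm : 1 ≤ m) {R : ℝ} (hR : 1 ≤ R) :
    ENNReal.ofReal (((4:ℝ)^m)⁻¹ / 2 * (1 + Real.log R)) * ω m
      ≤ ∫⁻ y in ball (0 : EuclideanSpace ℝ (Fin m)) R, F m y := by
  set K := ⌊Real.log R / Real.log 2⌋₊ with hK
  have hlogR : 0 ≤ Real.log R := Real.log_nonneg hR
  have hlog2 : 0 < Real.log 2 := Real.log_pos one_lt_two
  have hdivnn : 0 ≤ Real.log R / Real.log 2 := by positivity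
  have h1 : (2:ℝ)^K ≤ R := by
    have h : (K:ℝ) * Real.log 2 ≤ Real.log R := by
      rw [← le_div_iff₀ hlog2]
      exact Nat.floor_le hdivnn
    have hRpos : (0:ℝ) < R := by linarith
    rw [← Real.log_le_log_iff (by positivity) hRpos, Real.log_pow]
    exact h
  have h2 : 1 + Real.log R ≤ 2 * ((K:ℝ) + 1) := by
    have hfl : Real.log R / Real.log 2 < (K:ℝ) + 1 := by
      rw [hK]; exact Nat.lt_floor_add_one _
    have hl2 : Real.log 2 ≤ 1 := by
      have := Real.log_two_lt_d9; linarith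
    have hh : Real.log R < ((K:ℝ) + 1) * Real.log 2 := by
      rw [← div_lt_iff₀ hlog2]; exact hfl
    nlinarith
  calc ENNReal.ofReal (((4:ℝ)^m)⁻¹ / 2 * (1 + Real.log R)) * ω m
      ≤ ENNReal.ofReal (((4:ℝ)^m)⁻¹ * (K+1)) * ω m := by
        refine mul_le_mul_left (ENNReal.ofReal_le_ofReal ?_) _
        have h4m : (0:ℝ) < ((4:ℝ)^m)⁻¹ := by positivity
        nlinarith
    _ ≤ J m K := le_J hm K
    _ ≤ ∫⁻ y in ball (0 : EuclideanSpace ℝ (Fin m)) R, F m y :=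
        lintegral_mono_set (ball_subset_ball h1)

lemma mono_aux {m : ℕ} (hm : 1 ≤ m) {t r : ℝ} (ht : 1/2 ≤ t) (htr : t ≤ r) :
    (1 + Real.log (3*r)) / r^m ≤ (1 + Real.log (3*t)) / t^m := by
  have ht0 : 0 < t := by linarith
  have hr0 : 0 < r := by linarith
  have ha : 1 ≤ 1 + Real.log (3*t) := by
    have h32 : (0:ℝ) ≤ Real.log (3*t) := Real.log_nonneg (by linarith)
    linarith
  set u := r / t with hu
  have hu1 : 1 ≤ u := (one_le_div ht0).mpr htr
  have hu0 : 0 < u := by linarith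
  have hlogu : Real.log u ≤ u - 1 := by
    have := Real.log_le_sub_one_of_pos hu0
    linarith
  have hum : u ≤ u^m := le_self_pow₀ (by linarith) (by omega)
  have hr_eq : r = t * u := by rw [hu]; field_simp
  have hlog3r : Real.log (3*r) = Real.log (3*t) + Real.log u := by
    rw [hr_eq, show 3*(t*u) = (3*t)*u by ring,
      Real.log_mul (by positivity) (by positivity)]
  have hrm : r^m = t^m * u^m := by rw [hr_eq, mul_pow]
  rw [div_le_div_iff₀ (by positivity) (by positivity), hlog3r, hrm]
  have key : 1 + Real.log (3*t) + Real.log u ≤ (1 + Real.log (3*t)) * u^m := by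
    have h1 : (1 + Real.log (3*t)) * u ≤ (1 + Real.log (3*t)) * u^m :=
      mul_le_mul_of_nonneg_left hum (by linarith)
    have h2 : (u - 1) * 1 ≤ (u - 1) * (1 + Real.log (3*t)) :=
      mul_le_mul_of_nonneg_left ha (by linarith)
    nlinarith
  have hkey2 := mul_le_mul_of_nonneg_right key (le_of_lt (pow_pos ht0 m))
  nlinarith [pow_pos ht0 m, pow_pos hu0 m]

end St3Aux

set_option maxHeartbeats 2000000

open St3Aux in
/-- For `f(x') = (1 + |x'|)^{1-n}` on `ℝ^{n-1}` one has
`Mf(x') ≈ (1 + log₊|x'|)/(1 + |x'|^{n-1})`, with implicit constants depending only on `n`. -/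
theorem statement3 (n : ℕ) (hn : 2 ≤ n) :
    ∃ c C : ℝ, 0 < c ∧ 0 < C ∧
      ∀ x : EuclideanSpace ℝ (Fin (n - 1)),
        ENNReal.ofReal (c * ((1 + max 0 (Real.log ‖x‖)) / (1 + ‖x‖ ^ (n - 1)))) ≤
            hlMaximal (fun y => (1 + ‖y‖) ^ (1 - (n : ℝ))) x ∧
          hlMaximal (fun y => (1 + ‖y‖) ^ (1 - (n : ℝ))) x ≤
            ENNReal.ofReal (C * ((1 + max 0 (Real.log ‖x‖)) / (1 + ‖x‖ ^ (n - 1)))) := by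
  set m := n - 1 with hmdef
  have hm : 1 ≤ m := by omega
  have hcast : ((m : ℕ) : ℝ) = (n : ℝ) - 1 := by
    rw [hmdef, Nat.cast_sub (by omega)]; norm_num
  have hexp : (1 : ℝ) - n = -(m : ℝ) := by rw [hcast]; ring
  have hFy : ∀ y : EuclideanSpace ℝ (Fin m),
      ENNReal.ofReal |(1 + ‖y‖) ^ (1 - (n : ℝ))| = F m y := by
    intro y
    rw [F, hexp, abs_of_pos (Real.rpow_pos_of_pos (by positivity) _)]
  clear_value m
  refine ⟨((8:ℝ)^m)⁻¹ / 2 * ((2:ℝ)^m)⁻¹, (4:ℝ)^(m+2), by positivity, by positivity,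
    fun x => ?_⟩
  set c : ℝ := ((8:ℝ)^m)⁻¹ / 2 * ((2:ℝ)^m)⁻¹ with hc
  set C : ℝ := (4:ℝ)^(m+2) with hC
  set L : ℝ := max 0 (Real.log ‖x‖) with hL
  have hM : hlMaximal (fun y => (1 + ‖y‖) ^ (1 - (n : ℝ))) x
      = ⨆ r ∈ Set.Ioi (0:ℝ),
          (volume (ball x r))⁻¹ * ∫⁻ y in ball x r, F m y := by
    simp only [hlMaximal, hFy]
  -- real-number preliminaries
  set N : ℝ := 1 + ‖x‖ with hN
  clear_value c C L N
  have hx0 : (0:ℝ) ≤ ‖x‖ := norm_nonneg x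
  have hN1 : (1:ℝ) ≤ N := by rw [hN]; linarith
  have hL0 : (0:ℝ) ≤ L := by rw [hL]; exact le_max_left _ _
  have hlogN0 : (0:ℝ) ≤ Real.log N := Real.log_nonneg hN1
  have hL_le : L ≤ Real.log N := by
    rw [hL]
    rcases le_or_gt ‖x‖ 1 with h | h
    · exact max_le hlogN0 ((Real.log_nonpos hx0 h).trans hlogN0)
    · exact max_le hlogN0 (Real.log_le_log (by linarith) (by rw [hN]; linarith))
  have hlog2 : Real.log 2 ≤ 1 := by
    have := Real.log_two_lt_d9; linarith
  have hlogN_le : Real.log N ≤ 1 + L := by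
    rcases le_or_gt ‖x‖ 1 with h | h
    · have : Real.log N ≤ Real.log 2 :=
        Real.log_le_log (by linarith) (by rw [hN]; linarith)
      linarith
    · have h1 : Real.log N ≤ Real.log (2 * ‖x‖) :=
        Real.log_le_log (by linarith) (by rw [hN]; linarith)
      rw [Real.log_mul (by norm_num) (by linarith)] at h1
      have h2 : Real.log ‖x‖ ≤ L := by rw [hL]; exact le_max_right _ _
      linarith
  have hNm_pos : (0:ℝ) < N ^ m := pow_pos (by linarith) m
  have hden_pos : (0:ℝ) < 1 + ‖x‖ ^ m := by positivity
  have hxm_le : ‖x‖ ^ m ≤ N ^ m := pow_le_pow_left₀ hx0 (by rw [hN]; linarith) m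
  have honeN : (1:ℝ) ≤ N ^ m := one_le_pow₀ hN1
  have hden1 : 1 + ‖x‖ ^ m ≤ 2 * N ^ m := by linarith
  have hden2 : N ^ m ≤ 2 ^ m * (1 + ‖x‖ ^ m) := by
    rcases le_or_gt ‖x‖ 1 with h | h
    · have h1 : N ^ m ≤ 2 ^ m := pow_le_pow_left₀ (by positivity) (by rw [hN]; linarith) m
      nlinarith [pow_pos (show (0:ℝ) < 2 by norm_num) m, pow_nonneg hx0 m]
    · have h1 : N ^ m ≤ (2 * ‖x‖) ^ m :=
        pow_le_pow_left₀ (by positivity) (by rw [hN]; linarith) m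
      rw [mul_pow] at h1
      nlinarith [pow_pos (show (0:ℝ) < 2 by norm_num) m, pow_nonneg hx0 m]
  constructor
  · -- lower bound
    rw [hM]
    refine le_iSup₂_of_le (2 * N) (Set.mem_Ioi.mpr (by linarith)) ?_
    have hsub : ball (0 : EuclideanSpace ℝ (Fin m)) N ⊆ ball x (2 * N) := by
      intro y hy
      rw [mem_ball, dist_zero_right] at hy
      rw [mem_ball, dist_eq_norm]
      have h1 : ‖y - x‖ ≤ ‖y‖ + ‖x‖ := norm_sub_le y x
      have h2 : ‖x‖ = N - 1 := by rw [hN]; ring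
      linarith
    have hint : ENNReal.ofReal (((4:ℝ)^m)⁻¹ / 2 * (1 + Real.log N)) * ω m
        ≤ ∫⁻ y in ball x (2 * N), F m y :=
      (le_I hm (R := N) hN1).trans (lintegral_mono_set hsub)
    have h2N : (0:ℝ) < (2*N)^m := pow_pos (by linarith) m
    have hne0 : ENNReal.ofReal ((2*N)^m) ≠ 0 :=
      (ENNReal.ofReal_pos.mpr h2N).ne'
    have hneT : ENNReal.ofReal ((2*N)^m) ≠ ∞ := ENNReal.ofReal_ne_top
    have hveq : (volume (ball x (2*N)))⁻¹
          * (ENNReal.ofReal (((4:ℝ)^m)⁻¹ / 2 * (1 + Real.log N)) * ω m)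
        = ENNReal.ofReal (((2*N)^m)⁻¹ * (((4:ℝ)^m)⁻¹ / 2 * (1 + Real.log N))) := by
      rw [vol_ball hm x (by linarith),
        ENNReal.mul_inv (Or.inl hne0) (Or.inl hneT),
        mul_mul_mul_comm, ENNReal.inv_mul_cancel (ω_pos m).ne' (ω_ne_top m), mul_one,
        ← ENNReal.ofReal_inv_of_pos h2N,
        ← ENNReal.ofReal_mul (inv_nonneg.mpr h2N.le)]
    calc ENNReal.ofReal (c * ((1 + L) / (1 + ‖x‖ ^ m)))
        ≤ ENNReal.ofReal (((2*N)^m)⁻¹ * (((4:ℝ)^m)⁻¹ / 2 * (1 + Real.log N))) := by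
          apply ENNReal.ofReal_le_ofReal
          have hG2 : (1 + L) / (1 + ‖x‖ ^ m) ≤ 2^m * (1 + Real.log N) / N^m := by
            rw [div_le_div_iff₀ hden_pos hNm_pos]
            nlinarith [mul_le_mul (show 1 + L ≤ 1 + Real.log N by linarith) hden2
              hNm_pos.le (by linarith)]
          have hkey : c * (2^m * (1 + Real.log N) / N^m)
              = ((2*N)^m)⁻¹ * (((4:ℝ)^m)⁻¹ / 2 * (1 + Real.log N)) := by
            have h48 : (8:ℝ)^m = 4^m * 2^m := by rw [← mul_pow]; norm_num
            have h2m : (0:ℝ) < 2^m := by positivity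
            have h4m : (0:ℝ) < 4^m := by positivity
            have hNm0 : N^m ≠ 0 := hNm_pos.ne'
            rw [hc, h48, mul_pow]
            field_simp
          calc c * ((1 + L) / (1 + ‖x‖ ^ m))
              ≤ c * (2^m * (1 + Real.log N) / N^m) :=
                mul_le_mul_of_nonneg_left hG2 (by rw [hc]; positivity)
            _ = ((2*N)^m)⁻¹ * (((4:ℝ)^m)⁻¹ / 2 * (1 + Real.log N)) := hkey
      _ = (volume (ball x (2*N)))⁻¹
            * (ENNReal.ofReal (((4:ℝ)^m)⁻¹ / 2 * (1 + Real.log N)) * ω m) := hveq.symm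
      _ ≤ (volume (ball x (2*N)))⁻¹ * ∫⁻ y in ball x (2*N), F m y :=
          mul_le_mul_right hint _
  · -- upper bound
    rw [hM]
    refine iSup₂_le fun r hr => ?_
    have hr0 : (0:ℝ) < r := Set.mem_Ioi.mp hr
    by_cases hcase : r ≤ N / 2
    · -- small radii
      have hpt : ∀ y ∈ ball x r, F m y ≤ ENNReal.ofReal ((N/2) ^ (-(m:ℝ))) := by
        intro y hy
        apply F_le (by linarith)
        have hd : dist y x < r := mem_ball.mp hy
        rw [dist_eq_norm] at hd
        have h1 : ‖x‖ - ‖y‖ ≤ ‖y - x‖ := by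
          have h := norm_sub_norm_le x y
          have h2 : x - y = -(y - x) := (neg_sub y x).symm
          rw [h2, norm_neg] at h
          linarith
        have h2 : ‖x‖ = N - 1 := by rw [hN]; ring
        linarith
      have hint : (∫⁻ y in ball x r, F m y)
          ≤ ENNReal.ofReal ((N/2) ^ (-(m:ℝ))) * volume (ball x r) := by
        calc (∫⁻ y in ball x r, F m y)
            ≤ ∫⁻ _ in ball x r, ENNReal.ofReal ((N/2) ^ (-(m:ℝ))) :=
              setLIntegral_mono measurable_const hpt
          _ = _ := setLIntegral_const _ _
      have hvol0 : volume (ball x r) ≠ 0 := (measure_ball_pos volume x hr0).ne'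
      have hvolt : volume (ball x r) ≠ ∞ := measure_ball_lt_top.ne
      calc (volume (ball x r))⁻¹ * ∫⁻ y in ball x r, F m y
          ≤ (volume (ball x r))⁻¹
              * (ENNReal.ofReal ((N/2) ^ (-(m:ℝ))) * volume (ball x r)) :=
            mul_le_mul_right hint _
        _ = ENNReal.ofReal ((N/2) ^ (-(m:ℝ))) := by
            rw [mul_comm (ENNReal.ofReal _), ← mul_assoc,
              ENNReal.inv_mul_cancel hvol0 hvolt, one_mul]
        _ ≤ ENNReal.ofReal (C * ((1 + L) / (1 + ‖x‖ ^ m))) := by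
            apply ENNReal.ofReal_le_ofReal
            rw [Real.rpow_neg (by linarith), Real.rpow_natCast]
            have h1 : ((N/2):ℝ)^m = N^m / 2^m := div_pow N 2 m
            rw [h1, inv_div, ← mul_div_assoc, div_le_div_iff₀ hNm_pos hden_pos]
            have hCge : (2:ℝ)^(m+1) ≤ C := by
              rw [hC]
              calc (2:ℝ)^(m+1) ≤ 4^(m+1) :=
                    pow_le_pow_left₀ (by norm_num) (by norm_num) _
                _ ≤ 4^(m+2) := pow_le_pow_right₀ (by norm_num) (by omega)
            have hps : (2:ℝ)^(m+1) = 2^m * 2 := pow_succ 2 m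
            have ha : (2:ℝ)^m * (1 + ‖x‖^m) ≤ 2^m * (2 * N^m) :=
              mul_le_mul_of_nonneg_left hden1 (by positivity)
            have hb : (2:ℝ)^(m+1) * N^m ≤ C * N^m :=
              mul_le_mul_of_nonneg_right hCge hNm_pos.le
            have hcc : C * N^m ≤ C * (1 + L) * N^m := by
              have hC0 : (0:ℝ) ≤ C := by rw [hC]; positivity
              nlinarith [mul_nonneg (mul_nonneg hC0 hL0) hNm_pos.le]
            nlinarith
    · -- large radii
      push_neg at hcase
      have hrN : N ≤ 2 * r := by linarith
      have hsub2 : ball x r ⊆ ball (0 : EuclideanSpace ℝ (Fin m)) (3*r) := by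
        intro y hy
        rw [mem_ball] at hy
        rw [mem_ball, dist_zero_right]
        rw [dist_eq_norm] at hy
        have h1 : ‖y‖ - ‖x‖ ≤ ‖y - x‖ := norm_sub_norm_le y x
        have h2 : ‖x‖ = N - 1 := by rw [hN]; ring
        linarith
      have h3r : (1:ℝ) ≤ 3*r := by linarith
      have hint : (∫⁻ y in ball x r, F m y)
          ≤ ENNReal.ofReal ((2:ℝ)^(m+1) * (1 + Real.log (3*r))) * ω m :=
        (lintegral_mono_set hsub2).trans (I_le hm h3r)
      have hr3pos : (0:ℝ) ≤ 1 + Real.log (3*r) := by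
        have := Real.log_nonneg h3r; linarith
      have hrm : (0:ℝ) < r^m := pow_pos hr0 m
      have hne0 : ENNReal.ofReal (r^m) ≠ 0 := (ENNReal.ofReal_pos.mpr hrm).ne'
      have hneT : ENNReal.ofReal (r^m) ≠ ∞ := ENNReal.ofReal_ne_top
      have hveq : (volume (ball x r))⁻¹
            * (ENNReal.ofReal ((2:ℝ)^(m+1) * (1 + Real.log (3*r))) * ω m)
          = ENNReal.ofReal ((r^m)⁻¹ * ((2:ℝ)^(m+1) * (1 + Real.log (3*r)))) := by
        rw [vol_ball hm x hr0.le,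
          ENNReal.mul_inv (Or.inl hne0) (Or.inl hneT),
          mul_mul_mul_comm, ENNReal.inv_mul_cancel (ω_pos m).ne' (ω_ne_top m), mul_one,
          ← ENNReal.ofReal_inv_of_pos hrm,
          ← ENNReal.ofReal_mul (inv_nonneg.mpr hrm.le)]
      calc (volume (ball x r))⁻¹ * ∫⁻ y in ball x r, F m y
          ≤ (volume (ball x r))⁻¹
            * (ENNReal.ofReal ((2:ℝ)^(m+1) * (1 + Real.log (3*r))) * ω m) :=
            mul_le_mul_right hint _
        _ = ENNReal.ofReal ((r^m)⁻¹ * ((2:ℝ)^(m+1) * (1 + Real.log (3*r)))) := hveq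
        _ ≤ ENNReal.ofReal (C * ((1 + L) / (1 + ‖x‖ ^ m))) := by
            apply ENNReal.ofReal_le_ofReal
            have hmono := mono_aux hm (t := N/2) (r := r) (by linarith) (le_of_lt hcase)
            have hlogrw : Real.log (3*(N/2)) = Real.log (3/2) + Real.log N := by
              rw [show (3:ℝ)*(N/2) = (3/2)*N by ring,
                Real.log_mul (by norm_num) (ne_of_gt (by linarith))]
            have hlog32 : Real.log (3/2) ≤ 1/2 := by
              have := Real.log_le_sub_one_of_pos (show (0:ℝ) < 3/2 by norm_num)
              linarith
            have hstep1 : (1 + Real.log (3*r)) / r^m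
                ≤ 2^(m+1) * (1 + Real.log N) / N^m := by
              refine hmono.trans ?_
              rw [hlogrw, div_pow, div_div_eq_mul_div,
                div_le_div_iff₀ hNm_pos hNm_pos]
              have hps : (2:ℝ)^(m+1) = 2^m * 2 := pow_succ 2 m
              rw [hps]
              nlinarith [
                mul_le_mul_of_nonneg_right
                  (mul_le_mul_of_nonneg_right
                    (show (1 + (Real.log (3/2) + Real.log N)) ≤ 2*(1+Real.log N) by linarith)
                    (le_of_lt (pow_pos (show (0:ℝ) < 2 by norm_num) m)))
                  hNm_pos.le]
            have heq : (r^m)⁻¹ * ((2:ℝ)^(m+1) * (1 + Real.log (3*r)))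
                = 2^(m+1) * ((1 + Real.log (3*r)) / r^m) := by ring
            rw [heq]
            have h2 : 2^(m+1) * ((1 + Real.log (3*r)) / r^m)
                ≤ 2^(m+1) * (2^(m+1) * (1 + Real.log N) / N^m) :=
              mul_le_mul_of_nonneg_left hstep1 (by positivity)
            refine h2.trans ?_
            rw [show (2:ℝ)^(m+1) * (2^(m+1) * (1 + Real.log N) / N^m)
                = ((2:ℝ)^(m+1) * 2^(m+1) * (1 + Real.log N)) / N^m by ring,
              ← mul_div_assoc, div_le_div_iff₀ hNm_pos hden_pos]
            have h44 : (2:ℝ)^(m+1) * 2^(m+1) = 4^(m+1) := by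
              rw [← mul_pow]; norm_num
            have hC4 : C = 4^(m+1) * 4 := by rw [hC]; exact pow_succ 4 (m+1)
            have hlogN2 : 1 + Real.log N ≤ 2 * (1 + L) := by linarith
            rw [h44, hC4]
            nlinarith [pow_pos (show (0:ℝ) < 4 by norm_num) (m+1),
              mul_le_mul hlogN2 hden1 (by positivity) (by linarith),
              mul_pos hNm_pos (show (0:ℝ) < 1 + L by linarith)]
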